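/- Let ν > 1 and η > 0, set c := ∑_{n ∈ ℤ} (1+n²)^{−ν/2}, and define χ_η : [0,∞) → [0,∞) by χ_η(y) = η·y/log(y+2). Let ξ : [0,∞) → [0,∞) be an inverse of χ_η, i.e. χ_η(ξ(x)) = x and ξ(χ_η(y)) = y for all x, y ≥ 0. For r > 0 let N(r) := Nat.card {j ∈ ℕ | c·exp(−ξ(j)/2) > r}. Then N(r) is finite for each small r > 0 and N(r) = 2·η·(−log r)·(log(−log r))^{−1}·(1 + o(1)) as r → 0⁺; equivalently, lim_{r → 0⁺} N(r)·log(−log r)/(2·η·(−log r)) = 1. -/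

import Mathlib

/-!
Since `ν > 1` the series `c` converges to a positive number, and for `0 < r < c` we have
`c·exp(−ξ(j)/2) > r ↔ ξ(j) < 2 log(c/r) ↔ j < χ_η(2 log(c/r))`, because `χ_η` is strictly
increasing (concavity of `log` together with `log 2 > 0`). Hence `N(r) = ⌈χ_η(2 log(c/r))⌉₊`, and
with `L = −log r` this is `2η(L + log c)/log(2L + O(1)) + O(1) ∼ 2ηL/log L`.
-/

open Filter Topology Set Real Asymptotics

lemma summable_one_add_sq_rpow_neg {ν : ℝ} (hν : 1 < ν) :
    Summable fun n : ℤ => (1 + (n : ℝ) ^ 2) ^ (-(ν / 2)) := by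
  refine summable_of_isBigO (summable_abs_int_rpow hν) (IsBigO.of_bound' ?_)
  filter_upwards [eventually_cofinite_ne 0] with n hn
  have hn2 : 0 < (n : ℝ) ^ 2 := by positivity
  rw [Real.norm_of_nonneg (by positivity), Real.norm_of_nonneg (by positivity)]
  calc (1 + (n : ℝ) ^ 2) ^ (-(ν / 2)) ≤ ((n : ℝ) ^ 2) ^ (-(ν / 2)) :=
        rpow_le_rpow_of_nonpos hn2 (by linarith) (by linarith)
    _ = |(n : ℝ)| ^ (-ν) := by
        rw [← sq_abs, ← rpow_natCast, ← rpow_mul (abs_nonneg _)]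
        ring_nf

noncomputable def chi (η y : ℝ) : ℝ := η * y / log (y + 2)

lemma strictMonoOn_chi {η : ℝ} (hη : 0 < η) : StrictMonoOn (chi η) (Ici 0) := by
  intro a (ha : 0 ≤ a) b _ hab
  have hb : 0 < b := ha.trans_lt hab
  have hconc := strictConcaveOn_log_Ioi.concaveOn.2 (show (2 : ℝ) ∈ Ioi 0 by norm_num)
    (show b + 2 ∈ Ioi 0 by simp only [mem_Ioi]; linarith)
    (div_nonneg (by linarith : 0 ≤ b - a) hb.le) (div_nonneg ha hb.le)
    (by field_simp; ring)
  have hcomb : ((b - a) / b) • (2 : ℝ) + (a / b) • (b + 2) = a + 2 := by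
    simp only [smul_eq_mul]; field_simp; ring
  have key : (b - a) * log 2 + a * log (b + 2) ≤ b * log (a + 2) := by
    rwa [hcomb, smul_eq_mul, smul_eq_mul, div_mul_eq_mul_div, div_mul_eq_mul_div,
      ← add_div, div_le_iff₀' hb] at hconc
  have hlog2 : 0 < (b - a) * log 2 := mul_pos (by linarith) (log_pos one_lt_two)
  rw [chi, chi, div_lt_div_iff₀ (log_pos (by linarith)) (log_pos (by linarith)), mul_assoc,
    mul_assoc]
  exact mul_lt_mul_of_pos_left (by linarith) hη

lemma setOf_lt_eq_range_natCeil {f g : ℝ → ℝ} (hf : StrictMonoOn f (Ici 0))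
    (hg₀ : ∀ x, 0 ≤ x → 0 ≤ g x) (hfg : ∀ x, 0 ≤ x → f (g x) = x) {a : ℝ} (ha : 0 ≤ a) :
    {j : ℕ | g j < a} = Finset.range ⌈f a⌉₊ := by
  ext j
  have h := hf.lt_iff_lt (hg₀ j j.cast_nonneg) ha
  rw [hfg j j.cast_nonneg] at h
  simp only [mem_ofPred_eq, Finset.coe_range, mem_Iio, Nat.lt_ceil, h]

lemma lt_mul_exp_neg_half_iff {c r : ℝ} (hc : 0 < c) (hr : 0 < r) (t : ℝ) :
    r < c * exp (-t / 2) ↔ t < 2 * (log c - log r) := by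
  rw [← log_lt_log_iff hr (by positivity), log_mul hc.ne' (exp_ne_zero _), log_exp]
  constructor <;> intro h <;> linarith

lemma tendsto_log_div_log_mul_add {a : ℝ} (ha : 0 < a) (b : ℝ) :
    Tendsto (fun x => log x / log (a * x + b)) atTop (𝓝 1) := by
  have hdiff : Tendsto (fun x => log (a * x + b) - log x) atTop (𝓝 (log a)) := by
    have := (tendsto_log_comp_add_sub_log (b / a)).const_add (log a)
    rw [add_zero] at this
    refine this.congr' ?_
    filter_upwards [eventually_gt_atTop (0 : ℝ), eventually_gt_atTop (-(b / a))] with x hx hxb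
    rw [show a * x + b = a * (x + b / a) by field_simp, log_mul ha.ne' (by linarith)]
    ring
  have hratio : Tendsto (fun x => log (a * x + b) / log x) atTop (𝓝 1) := by
    have := (hdiff.div_atTop tendsto_log_atTop).const_add 1
    rw [add_zero] at this
    refine this.congr' ?_
    filter_upwards [eventually_gt_atTop (1 : ℝ)] with x hx
    field_simp [(log_pos hx).ne']
    ring
  simpa using hratio.inv₀ one_ne_zero

lemma tendsto_natCeil_mul_of_tendsto_mul {α : Type*} {l : Filter α} {x w : α → ℝ} {t : ℝ}
    (hx : ∀ᶠ a in l, 0 ≤ x a) (hw : ∀ᶠ a in l, 0 ≤ w a) (hw₀ : Tendsto w l (𝓝 0))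
    (h : Tendsto (fun a => x a * w a) l (𝓝 t)) :
    Tendsto (fun a => (⌈x a⌉₊ : ℝ) * w a) l (𝓝 t) := by
  have hub : Tendsto (fun a => (x a + 1) * w a) l (𝓝 t) := by
    simpa [add_mul] using h.add hw₀
  refine tendsto_of_tendsto_of_tendsto_of_le_of_le' h hub ?_ ?_
  · filter_upwards [hw] with a hwa
    exact mul_le_mul_of_nonneg_right (Nat.le_ceil _) hwa
  · filter_upwards [hx, hw] with a hxa hwa
    exact mul_le_mul_of_nonneg_right (Nat.ceil_lt_add_one hxa).le hwa

lemma tendsto_chi_mul_log_div {η : ℝ} (hη : 0 < η) (k : ℝ) :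
    Tendsto (fun L => chi η (2 * (k + L)) * (log L / (2 * η * L))) atTop (𝓝 1) := by
  have hfrac : Tendsto (fun L => k / L + 1) atTop (𝓝 1) := by
    simpa using (tendsto_const_nhds (x := k).div_atTop tendsto_id).add_const (1 : ℝ)
  have := hfrac.mul (tendsto_log_div_log_mul_add two_pos (2 * k + 2))
  rw [one_mul] at this
  refine this.congr' ?_
  filter_upwards [eventually_gt_atTop 0] with L hL
  rw [chi, show 2 * (k + L) + 2 = 2 * L + (2 * k + 2) by ring]
  field_simp

lemma tendsto_natCeil_chi_mul_log_div {η : ℝ} (hη : 0 < η) (k : ℝ) :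
    Tendsto (fun L => (⌈chi η (2 * (k + L))⌉₊ : ℝ) * (log L / (2 * η * L))) atTop (𝓝 1) := by
  refine tendsto_natCeil_mul_of_tendsto_mul ?_ ?_ ?_ (tendsto_chi_mul_log_div hη k)
  · filter_upwards [eventually_ge_atTop (-k)] with L hL
    exact div_nonneg (by nlinarith) (log_nonneg (by linarith))
  · filter_upwards [eventually_ge_atTop 1] with L hL
    exact div_nonneg (log_nonneg hL) (by positivity)
  · simpa using tendsto_pow_log_div_mul_add_atTop (2 * η) 0 1 (by positivity)

theorem stmt_14_general (ν η : ℝ) (hν : 1 < ν) (hη : 0 < η) (ξ : ℝ → ℝ)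
    (hξ₀ : ∀ x : ℝ, 0 ≤ x → 0 ≤ ξ x)
    (hξ₁ : ∀ x : ℝ, 0 ≤ x → η * ξ x / Real.log (ξ x + 2) = x) :
    (∀ᶠ r : ℝ in nhdsWithin 0 (Set.Ioi 0),
      {j : ℕ | (∑' n : ℤ, (1 + (n : ℝ) ^ 2) ^ (-(ν / 2))) *
        Real.exp (-ξ (j : ℝ) / 2) > r}.Finite) ∧
    Tendsto
      (fun r : ℝ =>
        (Nat.card {j : ℕ | (∑' n : ℤ, (1 + (n : ℝ) ^ 2) ^ (-(ν / 2))) *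
            Real.exp (-ξ (j : ℝ) / 2) > r} : ℝ) *
          Real.log (-Real.log r) / (2 * η * (-Real.log r)))
      (nhdsWithin 0 (Set.Ioi 0)) (nhds 1) := by
  set c := ∑' n : ℤ, (1 + (n : ℝ) ^ 2) ^ (-(ν / 2))
  have hc : 0 < c := (summable_one_add_sq_rpow_neg hν).tsum_pos
    (fun n => by positivity) 0 (by positivity)
  have hcount : ∀ r ∈ Ioo 0 c, {j : ℕ | c * exp (-ξ j / 2) > r} =
      Finset.range ⌈chi η (2 * (log c + -log r))⌉₊ := fun r ⟨hr, hrc⟩ => by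
    simp_rw [gt_iff_lt, lt_mul_exp_neg_half_iff hc hr, ← sub_eq_add_neg]
    exact setOf_lt_eq_range_natCeil (strictMonoOn_chi hη) hξ₀ hξ₁
      (by linarith [log_lt_log hr hrc])
  have hIoo : Ioo 0 c ∈ 𝓝[>] 0 := Ioo_mem_nhdsGT hc
  refine ⟨?_, ?_⟩
  · filter_upwards [hIoo] with r hr
    rw [hcount r hr]
    exact Finset.finite_toSet _
  · refine ((tendsto_natCeil_chi_mul_log_div hη (log c)).comp
      (tendsto_neg_atBot_atTop.comp tendsto_log_nhdsGT_zero)).congr' ?_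
    filter_upwards [hIoo] with r hr
    rw [hcount r hr, Nat.card_coe_set_eq, ncard_coe_finset, Finset.card_range, mul_div_assoc]
    rfl

/-- Eigenvalue counting asymptotics for weights `c·exp(−ξ(j)/2)` where `ξ` is
the inverse of `χ_η(y) = η·y/log(y+2)`:
`N(r) = 2η·(−log r)·(log(−log r))⁻¹·(1+o(1))` as `r → 0⁺`. -/
theorem stmt_14 (ν η : ℝ) (hν : 1 < ν) (hη : 0 < η) (ξ : ℝ → ℝ)
    (hξ₀ : ∀ x : ℝ, 0 ≤ x → 0 ≤ ξ x)
    (hξ₁ : ∀ x : ℝ, 0 ≤ x → η * ξ x / Real.log (ξ x + 2) = x)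
    (hξ₂ : ∀ y : ℝ, 0 ≤ y → ξ (η * y / Real.log (y + 2)) = y) :
    (∀ᶠ r : ℝ in nhdsWithin 0 (Set.Ioi 0),
      {j : ℕ | (∑' n : ℤ, (1 + (n : ℝ) ^ 2) ^ (-(ν / 2))) *
        Real.exp (-ξ (j : ℝ) / 2) > r}.Finite) ∧
    Tendsto
      (fun r : ℝ =>
        (Nat.card {j : ℕ | (∑' n : ℤ, (1 + (n : ℝ) ^ 2) ^ (-(ν / 2))) *
            Real.exp (-ξ (j : ℝ) / 2) > r} : ℝ) *
          Real.log (-Real.log r) / (2 * η * (-Real.log r)))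
      (nhdsWithin 0 (Set.Ioi 0)) (nhds 1) :=
  stmt_14_general ν η hν hη ξ hξ₀ hξ₁
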